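/- arXiv:2111.01971 — 6 statements merged into one kernel-verified Lean document; each statement's English description precedes it below -/
import Mathlib

section
/- Let x* ∈ S^{n-1} be a point satisfying the first and second order necessary optimality conditions for minimizing f on the sphere (i.e., ∇f(x*) = λ* x* for some real λ*, and u^T ∇²f(x*) u ≥ λ* for all unit u ⟂ x*). If the second order sufficient condition fails at x* (i.e., there exists a unit vector u ⟂ x* with u^T ∇²f(x*) u = λ*), then there exists a nonzero y* ∈ ℝ^n with (y*)^T x* = 0 such that the 2n-row matrix with block rows [∇f(x*), x*, 0] and [∇²f(x*) y*, y*, x*] (an n×3 and n×3 stacking, forming a (2n)×3 matrix) has rank at most 2. -/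
open RealInnerProductSpace

/-- If `x*` is an SONC point of `min f` on the sphere and the SOSC fails at `x*`,
then there is a nonzero `y* ⟂ x*` such that the `(2n)×3` matrix with block rows
`[∇f(x*), x*, 0]` and `[∇²f(x*)y*, y*, x*]` has rank at most `2`. -/
theorem stmt2 (n : ℕ) (f : EuclideanSpace ℝ (Fin n) → ℝ)
    (hf : ContDiff ℝ (⊤ : ℕ∞) f)
    (x : EuclideanSpace ℝ (Fin n)) (hx : ‖x‖ = 1) (lam : ℝ)
    (hfonc : gradient f x = lam • x)
    (hsonc : ∀ u : EuclideanSpace ℝ (Fin n), ‖u‖ = 1 → ⟪u, x⟫ = 0 →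
      0 ≤ ⟪u, (fderiv ℝ (gradient f) x) u⟫ - lam)
    (hfail : ∃ u : EuclideanSpace ℝ (Fin n), ‖u‖ = 1 ∧ ⟪u, x⟫ = 0 ∧
      ⟪u, (fderiv ℝ (gradient f) x) u⟫ = lam) :
    ∃ y : EuclideanSpace ℝ (Fin n), y ≠ 0 ∧ ⟪y, x⟫ = 0 ∧
      Matrix.rank (Matrix.of (Sum.elim
        (fun i : Fin n => ![gradient f x i, x i, 0])
        (fun i : Fin n => ![(fderiv ℝ (gradient f) x) y i, y i, x i]))) ≤ 2 := by
  classical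
  obtain ⟨u, hu1, hux, heq⟩ := hfail
  set H := fderiv ℝ (gradient f) x with hH
  -- symmetry of the Hessian
  have hsecond : IsSymmSndFDerivAt ℝ f x := hf.contDiffAt.isSymmSndFDerivAt (by simp; exact WithTop.coe_le_coe.mpr (le_top : (2:ℕ∞) ≤ ⊤))
  have happ : ∀ v w : EuclideanSpace ℝ (Fin n),
      ⟪v, H w⟫ = fderiv ℝ (fderiv ℝ f) x w v := by
    intro v w
    rw [real_inner_comm]
    have hgradeq : gradient f =
        ⇑(InnerProductSpace.toDual ℝ (EuclideanSpace ℝ (Fin n))).symm ∘ fderiv ℝ f := rfl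
    rw [hH, hgradeq, LinearIsometryEquiv.comp_fderiv]
    exact InnerProductSpace.toDual_symm_apply
  have hsym : ∀ v w : EuclideanSpace ℝ (Fin n), ⟪v, H w⟫ = ⟪w, H v⟫ := by
    intro v w
    rw [happ, happ]
    exact hsecond w v
  -- positivity of the quadratic form on the orthogonal complement
  have hpos : ∀ v : EuclideanSpace ℝ (Fin n), ⟪v, x⟫ = 0 →
      0 ≤ ⟪v, H v⟫ - lam * ⟪v, v⟫ := by
    intro v hv
    rcases eq_or_ne v 0 with rfl | hv0
    · simp
    · have hn : (0:ℝ) < ‖v‖ := norm_pos_iff.mpr hv0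
      have h := hsonc (‖v‖⁻¹ • v)
        (by rw [norm_smul]; simp [abs_of_nonneg (inv_nonneg.mpr hn.le), inv_mul_cancel₀ hn.ne'])
        (by rw [real_inner_smul_left, hv, mul_zero])
      rw [map_smul, real_inner_smul_left, real_inner_smul_right] at h
      have hvv : ⟪v, v⟫ = ‖v‖ ^ 2 := real_inner_self_eq_norm_sq v
      have h2 : (0:ℝ) < ‖v‖ ^ 2 := by positivity
      rw [hvv]
      have h5 : lam ≤ ‖v‖⁻¹ * (‖v‖⁻¹ * inner ℝ v (H v)) := by linarith
      have h6 : lam * ‖v‖ ^ 2 ≤ (‖v‖⁻¹ * (‖v‖⁻¹ * inner ℝ v (H v))) * ‖v‖ ^ 2 :=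
        mul_le_mul_of_nonneg_right h5 h2.le
      have h8 : ‖v‖⁻¹ * ‖v‖ = 1 := inv_mul_cancel₀ hn.ne'
      have h7 : (‖v‖⁻¹ * (‖v‖⁻¹ * inner ℝ v (H v))) * ‖v‖ ^ 2 = inner ℝ v (H v) := by
        calc (‖v‖⁻¹ * (‖v‖⁻¹ * inner ℝ v (H v))) * ‖v‖ ^ 2
            = inner ℝ v (H v) * ((‖v‖⁻¹ * ‖v‖) * (‖v‖⁻¹ * ‖v‖)) := by ring
          _ = inner ℝ v (H v) := by rw [h8]; ring
      linarith
  have huu : ⟪u, u⟫ = 1 := by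
    rw [real_inner_self_eq_norm_sq, hu1]; norm_num
  -- the variational argument: for w ⟂ x, ⟪w, H u⟫ = lam ⟪w, u⟫
  have hkey : ∀ w : EuclideanSpace ℝ (Fin n), ⟪w, x⟫ = 0 →
      ⟪w, H u⟫ = lam * ⟪w, u⟫ := by
    intro w hw
    have ha : 0 ≤ ⟪w, H w⟫ - lam * ⟪w, w⟫ := hpos w hw
    have expand : ∀ t : ℝ, 0 ≤ t * (2 * (⟪w, H u⟫ - lam * ⟪w, u⟫))
        + t ^ 2 * (⟪w, H w⟫ - lam * ⟪w, w⟫) := by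
      intro t
      have h := hpos (u + t • w)
        (by rw [inner_add_left, real_inner_smul_left, hux, hw]; ring)
      have e1 : ⟪u + t • w, H (u + t • w)⟫ =
          ⟪u, H u⟫ + t * ⟪u, H w⟫ + t * ⟪w, H u⟫ + t ^ 2 * ⟪w, H w⟫ := by
        rw [map_add, map_smul]
        simp only [inner_add_left, inner_add_right, real_inner_smul_left,
          real_inner_smul_right, smul_eq_mul]
        ring
      have e2 : ⟪u + t • w, u + t • w⟫ = ⟪u, u⟫ + 2 * t * ⟪w, u⟫ + t ^ 2 * ⟪w, w⟫ := by
        simp only [inner_add_left, inner_add_right, real_inner_smul_left,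
          real_inner_smul_right, smul_eq_mul]
        rw [real_inner_comm w u]
        ring
      rw [e1, e2, huu, heq, hsym u w] at h
      nlinarith [h]
    set a : ℝ := ⟪w, H w⟫ - lam * ⟪w, w⟫ with ha_def
    set b : ℝ := ⟪w, H u⟫ - lam * ⟪w, u⟫ with hb_def
    have hA : (0:ℝ) < a + 1 := by linarith
    obtain ⟨s, hs⟩ : ∃ s : ℝ, s = b / (a + 1) := ⟨_, rfl⟩
    have hbb : b = s * (a + 1) := by rw [hs]; field_simp
    have ht1 := expand (-s)
    rw [hbb] at ht1
    have hsq : s ^ 2 = 0 := by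
      refine le_antisymm ?_ (sq_nonneg _)
      nlinarith [ht1, mul_nonneg ha (sq_nonneg s)]
    have hb0 : b = 0 := by
      rw [hbb, pow_eq_zero_iff (two_ne_zero) |>.mp hsq, zero_mul]
    have h5 : ⟪w, H u⟫ - lam * ⟪w, u⟫ = 0 := hb0
    linarith
  -- conclude H u = lam • u + c • x
  set c : ℝ := ⟪x, H u⟫ with hc_def
  have hxx : ⟪x, x⟫ = 1 := by rw [real_inner_self_eq_norm_sq, hx]; norm_num
  set v : EuclideanSpace ℝ (Fin n) := H u - lam • u - c • x with hv_def
  have hvx : ⟪v, x⟫ = 0 := by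
    have h1 : ⟪H u, x⟫ = c := by rw [real_inner_comm]
    rw [hv_def, inner_sub_left, inner_sub_left, real_inner_smul_left,
      real_inner_smul_left, h1, hux, hxx]
    ring
  have h2 : ⟪v, H u - lam • u - c • x⟫ = 0 := by
    rw [inner_sub_right, inner_sub_right, real_inner_smul_right,
      real_inner_smul_right, hkey v hvx, hvx]
    ring
  rw [← hv_def] at h2
  have hv0 : v = 0 := inner_self_eq_zero.mp h2
  have hHu : H u = lam • u + c • x := by
    have h0 : H u - (lam • u + c • x) = 0 := by
      rw [← sub_sub]; rw [← hv_def]; exact hv0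
    exact sub_eq_zero.mp h0
  have hHui : ∀ i, H u i = lam * u i + c * x i := by
    intro i; rw [hHu]; rfl
  have hgi : ∀ i, gradient f x i = lam * x i := by
    intro i; rw [hfonc]; rfl
  -- build the factorization
  refine ⟨u, fun h => by simp [h] at hu1, hux, ?_⟩
  set N : Matrix (Fin n ⊕ Fin n) (Fin 2) ℝ :=
    Matrix.of (Sum.elim (fun i : Fin n => ![x i, 0]) (fun i : Fin n => ![u i, x i])) with hN
  set P : Matrix (Fin 2) (Fin 3) ℝ := !![lam, 1, 0; c, 0, 1] with hP
  have hM : Matrix.of (Sum.elim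
        (fun i : Fin n => ![gradient f x i, x i, 0])
        (fun i : Fin n => ![H u i, u i, x i])) = N * P := by
    ext j k
    rcases j with i | i <;> fin_cases k <;>
      simp [hN, hP, Matrix.mul_apply, Fin.sum_univ_two, hgi i, hHui i] <;> ring
  rw [hM]
  exact (Matrix.rank_mul_le_left N P).trans
    ((N.rank_le_card_width).trans (by simp))
end

section
/- Let x* ∈ S^{n-1} and suppose there exists a nonzero y* ∈ ℝ^n with (y*)^T x* = 0 such that the (2n)×3 matrix with columns (∇f(x*), ∇²f(x*)y*), (x*, y*), (0, x*) has rank at most 2. Then there exists λ* ∈ ℝ with ∇f(x*) = λ* x* (first order necessary condition holds), and the second order sufficient condition fails at x*: namely (y*)^T ∇²f(x*) y* - λ* ‖y*‖² = 0 for this y* orthogonal to x*. -/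
open RealInnerProductSpace

/-- Kernel vector exists when rank < number of columns. -/
lemma exists_kernel_vec {m : Type*} [Fintype m] (M : Matrix m (Fin 3) ℝ)
    (h : M.rank ≤ 2) : ∃ v : Fin 3 → ℝ, v ≠ 0 ∧ M.mulVec v = 0 := by
  have hrn := LinearMap.finrank_range_add_finrank_ker M.mulVecLin
  have h3 : Module.finrank ℝ (Fin 3 → ℝ) = 3 := by simp
  rw [h3] at hrn
  have hker : Module.finrank ℝ (LinearMap.ker M.mulVecLin) ≠ 0 := by
    intro h0
    rw [h0] at hrn
    have : M.rank = 3 := by rw [Matrix.rank]; omega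
    omega
  have hne : LinearMap.ker M.mulVecLin ≠ ⊥ := by
    intro hb
    rw [hb] at hker
    simp at hker
  obtain ⟨v, hv, hv0⟩ := Submodule.exists_mem_ne_zero_of_ne_bot hne
  exact ⟨v, hv0, hv⟩

/-- If `x* ∈ S^{n-1}` and there is a nonzero `y* ⟂ x*` such that the `(2n)×3` matrix
with columns `(∇f(x*), ∇²f(x*)y*)`, `(x*, y*)`, `(0, x*)` has rank at most `2`,
then the first order necessary condition holds at `x*` with some multiplier `λ*`
and the second order sufficient condition fails:
`(y*)ᵀ∇²f(x*)y* - λ*‖y*‖² = 0`. -/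
theorem stmt3 (n : ℕ) (f : EuclideanSpace ℝ (Fin n) → ℝ)
    (hf : ContDiff ℝ (⊤ : ℕ∞) f)
    (x : EuclideanSpace ℝ (Fin n)) (hx : ‖x‖ = 1)
    (y : EuclideanSpace ℝ (Fin n)) (hy : y ≠ 0) (hyx : ⟪y, x⟫ = 0)
    (hrank : Matrix.rank (Matrix.of (Sum.elim
        (fun i : Fin n => ![gradient f x i, x i, 0])
        (fun i : Fin n => ![(fderiv ℝ (gradient f) x) y i, y i, x i]))) ≤ 2) :
    ∃ lam : ℝ, gradient f x = lam • x ∧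
      ⟪y, (fderiv ℝ (gradient f) x) y⟫ - lam * ‖y‖ ^ 2 = 0 := by
  obtain ⟨v, hv0, hv⟩ := exists_kernel_vec _ hrank
  set g := gradient f x
  set H := (fderiv ℝ (gradient f) x) y
  -- extract equations
  have htop : ∀ i : Fin n, g i * v 0 + x i * v 1 = 0 := by
    intro i
    have := congrFun hv (Sum.inl i)
    simpa [Matrix.mulVec, dotProduct, Fin.sum_univ_three] using this
  have hbot : ∀ i : Fin n, H i * v 0 + y i * v 1 + x i * v 2 = 0 := by
    intro i
    have := congrFun hv (Sum.inr i)
    simpa [Matrix.mulVec, dotProduct, Fin.sum_univ_three, mul_add, add_assoc]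
      using this
  have hxne : x ≠ 0 := by
    intro h0; rw [h0] at hx; simp at hx
  obtain ⟨i0, hi0⟩ : ∃ i, x i ≠ 0 := by
    by_contra h
    push_neg at h
    exact hxne (by ext i; simpa using h i)
  have hv0ne : v 0 ≠ 0 := by
    intro h0
    have h1 : v 1 = 0 := by
      have h := htop i0
      rw [h0] at h
      simp at h
      rcases h with h | h
      · exact absurd h hi0
      · exact h
    have h2 : v 2 = 0 := by
      have h := hbot i0
      rw [h0, h1] at h
      simp at h
      rcases h with h | h
      · exact absurd h hi0
      · exact h
    apply hv0
    funext j
    fin_cases j <;> simp [h0, h1, h2]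
  refine ⟨-(v 1) / v 0, ?_, ?_⟩
  · ext i
    have h := htop i
    have : g i = -(v 1) / v 0 * x i := by
      rw [div_mul_eq_mul_div, eq_div_iff hv0ne]
      linarith
    simpa [PiLp.smul_apply, smul_eq_mul] using this
  · have hsum : v 0 * ⟪y, H⟫ + v 1 * ⟪y, y⟫ + v 2 * ⟪y, x⟫ = 0 := by
      simp only [PiLp.inner_apply, RCLike.inner_apply, conj_trivial]
      rw [Finset.mul_sum, Finset.mul_sum, Finset.mul_sum,
        ← Finset.sum_add_distrib, ← Finset.sum_add_distrib]
      apply Finset.sum_eq_zero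
      intro i _
      have h := hbot i
      linear_combination y i * h
    rw [hyx, mul_zero, add_zero, real_inner_self_eq_norm_sq] at hsum
    have : ⟪y, H⟫ = -(v 1) / v 0 * ‖y‖ ^ 2 := by
      rw [div_mul_eq_mul_div, eq_div_iff hv0ne]
      linarith
    rw [this]
    ring
end

section
/- Let p(x) = (1/2)(x₁² + 2x₂² + ⋯ + n xₙ²) on ℂ^n. There do not exist x* ∈ ℂ^n with x* ≠ 0 and λ* ∈ ℂ such that both ∇p(x*) = λ* x* and det(H(x*, λ*)) = 0, where H(x, λ) is the (n+1)×(n+1) bordered Hessian matrix [[∇²p(x) - λ Iₙ, x], [x^T, 0]]. -/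
/-- For `p(x) = (1/2)(x₁² + 2x₂² + ⋯ + n xₙ²)` on `ℂⁿ` (so `∇p(x)ₖ = k xₖ` and
`∇²p(x) = diag(1,…,n)`), there are no `x* ≠ 0` and `λ* ∈ ℂ` with `∇p(x*) = λ* x*`
and `det H(x*, λ*) = 0`, where `H(x,λ) = [[∇²p(x) - λ Iₙ, x],[xᵀ, 0]]`. -/
theorem stmt4 (n : ℕ) :
    ¬ ∃ (x : Fin n → ℂ) (lam : ℂ), x ≠ 0 ∧
      (∀ k : Fin n, ((k : ℕ) + 1 : ℂ) * x k = lam * x k) ∧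
      Matrix.det (Matrix.fromBlocks
        (Matrix.diagonal (fun k : Fin n => ((k : ℕ) + 1 : ℂ)) - lam • (1 : Matrix (Fin n) (Fin n) ℂ))
        (Matrix.of fun (i : Fin n) (_ : Unit) => x i)
        (Matrix.of fun (_ : Unit) (j : Fin n) => x j)
        (0 : Matrix Unit Unit ℂ)) = 0 := by
  rintro ⟨x, lam, hx, heig, hdet⟩
  obtain ⟨j, hj⟩ := Function.ne_iff.mp hx
  have hjx : x j ≠ 0 := hj
  have hlam : ((j : ℕ) + 1 : ℂ) = lam := mul_right_cancel₀ hjx (heig j)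
  have hdj : ((j : ℕ) + 1 : ℂ) - lam = 0 := by rw [hlam]; ring
  have hdk : ∀ k : Fin n, k ≠ j → ((k : ℕ) + 1 : ℂ) - lam ≠ 0 := by
    intro k hk h
    apply hk
    have : ((k : ℕ) : ℂ) = ((j : ℕ) : ℂ) := by
      have := hlam; linear_combination h - this
    exact Fin.ext (Nat.cast_injective this)
  have hxk : ∀ k : Fin n, k ≠ j → x k = 0 := by
    intro k hk
    have h := heig k
    have h2 : (((k : ℕ) + 1 : ℂ) - lam) * x k = 0 := by linear_combination h
    rcases mul_eq_zero.mp h2 with h3 | h3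
    · exact absurd h3 (hdk k hk)
    · exact h3
  set M : Matrix (Fin n ⊕ Unit) (Fin n ⊕ Unit) ℂ := Matrix.fromBlocks
        (Matrix.diagonal (fun k : Fin n => ((k : ℕ) + 1 : ℂ)) - lam • (1 : Matrix (Fin n) (Fin n) ℂ))
        (Matrix.of fun (i : Fin n) (_ : Unit) => x i)
        (Matrix.of fun (_ : Unit) (j : Fin n) => x j)
        (0 : Matrix Unit Unit ℂ) with hM
  set N : Matrix (Fin n ⊕ Unit) (Fin n ⊕ Unit) ℂ := Matrix.fromBlocks
        (Matrix.of fun (i i' : Fin n) => if i = i' ∧ i ≠ j then (((i : ℕ) + 1 : ℂ) - lam)⁻¹ else 0)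
        (Matrix.of fun (i : Fin n) (_ : Unit) => if i = j then (x j)⁻¹ else 0)
        (Matrix.of fun (_ : Unit) (i : Fin n) => if i = j then (x j)⁻¹ else 0)
        (0 : Matrix Unit Unit ℂ) with hN
  have hMN : M * N = 1 := by
    ext p q
    cases p with
    | inl i =>
      cases q with
      | inl i' =>
        simp only [hM, hN, Matrix.mul_apply, Fintype.sum_sum_type, Matrix.fromBlocks_apply₁₁,
          Matrix.fromBlocks_apply₁₂, Matrix.fromBlocks_apply₂₁, Matrix.of_apply,
          Matrix.sub_apply, Matrix.diagonal_apply, Matrix.smul_apply, Matrix.one_apply,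
          smul_eq_mul, Finset.univ_unique, Finset.sum_singleton, Matrix.one_apply]
        rw [Finset.sum_eq_single i]
        · by_cases hii : i = i'
          · subst hii
            by_cases hij : i = j
            · subst hij
              simp [hdj, hjx]
            · simp [hij, hxk i hij, mul_inv_cancel₀ (hdk i hij)]
          · by_cases hij : i' = j
            · subst hij
              simp [Ne.symm hii, hii, hxk i (by simpa using hii), hii]
            · simp [hii, hij, Ne.symm hii]
        · intro b _ hb
          simp [Ne.symm hb]
        · intro h; simp at h
      | inr u =>
        simp only [hM, hN, Matrix.mul_apply, Fintype.sum_sum_type, Matrix.fromBlocks_apply₁₁,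
          Matrix.fromBlocks_apply₁₂, Matrix.fromBlocks_apply₂₂, Matrix.of_apply,
          Matrix.sub_apply, Matrix.diagonal_apply, Matrix.smul_apply, Matrix.one_apply,
          smul_eq_mul, Finset.univ_unique, Finset.sum_singleton, Matrix.zero_apply, mul_zero, Finset.sum_const_zero,
          add_zero]
        rw [Finset.sum_eq_single i]
        · by_cases hij : i = j
          · subst hij; simp [hdj]
          · simp [hij]
        · intro b _ hb; simp [Ne.symm hb]
        · intro h; simp at h
    | inr u =>
      cases q with
      | inl i' =>
        simp only [hM, hN, Matrix.mul_apply, Fintype.sum_sum_type, Matrix.fromBlocks_apply₂₁,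
          Matrix.fromBlocks_apply₂₂, Matrix.fromBlocks_apply₁₁, Matrix.of_apply,
          Finset.univ_unique, Finset.sum_singleton, Matrix.zero_apply, zero_mul, add_zero, Matrix.one_apply]
        rw [Finset.sum_eq_single j]
        · simp [Ne.symm]
        · intro b _ hb
          simp [hxk b hb]
        · intro h; simp at h
      | inr u' =>
        simp only [hM, hN, Matrix.mul_apply, Fintype.sum_sum_type, Matrix.fromBlocks_apply₂₁,
          Matrix.fromBlocks_apply₂₂, Matrix.fromBlocks_apply₁₂, Matrix.of_apply,
          Finset.univ_unique, Finset.sum_singleton, Matrix.zero_apply, zero_mul, add_zero, Matrix.one_apply]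
        rw [Finset.sum_eq_single j]
        · simp [mul_inv_cancel₀ hjx]
        · intro b _ hb
          simp [hxk b hb]
        · intro h; simp at h
  have h1 : Matrix.det M * Matrix.det N = 1 := by
    rw [← Matrix.det_mul, hMN, Matrix.det_one]
  rw [hdet, zero_mul] at h1
  exact zero_ne_one h1
end

section
/- Fix an integer d ≥ 1 with d ≠ 2, set α = 2^{d-2}, and let p(x) = α x₁^d + α² x₂^d + ⋯ + α^n xₙ^d on ℂ^n. There do not exist x* ∈ ℂ^n with x* ≠ 0 and λ* ∈ ℂ such that ∇p(x*) = λ* x* and det(H(x*, λ*)) = 0, where H(x,λ) = [[∇²p(x) - λ Iₙ, x], [x^T, 0]]. -/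
/-!
On the support of `x` the eigen-equation reads `d α^(k+1) x_k^(d-2) = λ`. Hence `λ ≠ 0`, the
diagonal of `∇²p(x) - λ I` is `(d-2)λ` on the support and `-λ` off it, so it is invertible, and
taking moduli, `2^k |x_k|` is constant on the support: since `d ≠ 2` the exponent `d - 2` can be
cancelled, and `α = 2^(d-2)` is what makes the ratio `2`. By the Schur complement, `det H` is a
nonzero multiple of `∑ x_k²`. This sum cannot vanish: every nonzero term has `|x_k²| = c 4^(-k)`
for one `c > 0`, so if `k₀` is the first index of the support, the other terms have moduli
summing to less than `c ∑_{k > k₀} 4^(-k) < c 4^(-k₀) / 3`.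
-/

open Matrix Finset

theorem Matrix.det_fromBlocks_diagonal_eq_zero_iff {K ι : Type*} [Field K] [Fintype ι]
    [DecidableEq ι] {g u v : ι → K} (hg : ∀ i, g i ≠ 0) :
    (fromBlocks (diagonal g) (of fun i (_ : Unit) => u i) (of fun (_ : Unit) j => v j)
      (0 : Matrix Unit Unit K)).det = 0 ↔ ∑ i, u i * v i / g i = 0 := by
  have hprod : ∏ i, g i ≠ 0 := prod_ne_zero_iff.mpr fun i _ => hg i
  let := invertibleOfIsUnitDet (diagonal g) (by simpa using hprod.isUnit)
  have hinv : ⅟(diagonal g) = diagonal g⁻¹ :=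
    invOf_eq_right_inv (by simp [diagonal_mul_diagonal, hg, ← diagonal_one])
  rw [det_fromBlocks₁₁, hinv, det_diagonal, det_unique]
  simp [Matrix.mul_apply, diagonal_apply, hprod, div_eq_mul_inv, mul_comm, mul_assoc]

theorem sum_mul_self_div_eq_of_eq_on_support {K ι : Type*} [Field K] [Fintype ι] {g u : ι → K}
    {c : K} (h : ∀ i, u i ≠ 0 → g i = c) : ∑ i, u i * u i / g i = (∑ i, u i ^ 2) / c := by
  rw [sum_div]
  refine sum_congr rfl fun i _ => ?_
  by_cases hi : u i = 0
  · simp [hi]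
  · rw [h i hi, sq]

theorem sum_inv_four_pow_lt_of_subset_Ioo {s : Finset ℕ} {m n : ℕ} (hs : s ⊆ Ioo m n) :
    ∑ j ∈ s, (4 : ℝ)⁻¹ ^ j < 4⁻¹ ^ m := by
  calc ∑ j ∈ s, (4 : ℝ)⁻¹ ^ j
      ≤ ∑ j ∈ Ico (m + 1) n, (4 : ℝ)⁻¹ ^ j := by
        rw [Ico_add_one_left_eq_Ioo]
        exact sum_le_sum_of_subset_of_nonneg hs fun _ _ _ => by positivity
    _ ≤ 4⁻¹ ^ (m + 1) / (1 - 4⁻¹) := geom_sum_Ico_le_of_lt_one (by norm_num) (by norm_num)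
    _ < 4⁻¹ ^ m := by
        have : (0 : ℝ) < 4⁻¹ ^ m := by positivity
        rw [pow_succ]
        norm_num
        linarith

theorem Fin.sum_sq_ne_zero_of_two_pow_mul_norm_eq {𝕜 : Type*} [NormedField 𝕜] {n : ℕ}
    {x : Fin n → 𝕜} (hx : x ≠ 0)
    (h : ∀ j k, x j ≠ 0 → x k ≠ 0 → 2 ^ (j : ℕ) * ‖x j‖ = 2 ^ (k : ℕ) * ‖x k‖) :
    ∑ k, x k ^ 2 ≠ 0 := by
  classical
  set S := univ.filter (x · ≠ 0)
  obtain ⟨k₀, hk₀S, hmin⟩ := S.exists_min_image Fin.val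
    (by simpa [S, Finset.Nonempty, Function.ne_iff] using hx)
  have hk₀ : x k₀ ≠ 0 := (mem_filter.mp hk₀S).2
  set c : ℝ := (2 ^ (k₀ : ℕ) * ‖x k₀‖) ^ 2 with hc
  have hnorm : ∀ k ∈ S, ‖x k ^ 2‖ = c * 4⁻¹ ^ (k : ℕ) := by
    intro k hk
    have hk := h k k₀ (mem_filter.mp hk).2 hk₀
    rw [norm_pow, hc, ← hk, mul_pow, ← pow_mul, mul_comm _ 2, pow_mul, mul_right_comm, ← mul_pow]
    norm_num
  intro hsum
  have hsplit : x k₀ ^ 2 = -∑ k ∈ S.erase k₀, x k ^ 2 := by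
    rw [eq_neg_iff_add_eq_zero, add_sum_erase S (fun k => x k ^ 2) hk₀S, ← hsum]
    exact sum_filter_of_ne fun k _ hk => pow_ne_zero_iff two_ne_zero |>.mp hk
  have : ‖x k₀ ^ 2‖ < ‖x k₀ ^ 2‖ := calc
    ‖x k₀ ^ 2‖ ≤ ∑ k ∈ S.erase k₀, ‖x k ^ 2‖ := by rw [hsplit, norm_neg]; exact norm_sum_le _ _
    _ = c * ∑ j ∈ (S.erase k₀).map Fin.valEmbedding, 4⁻¹ ^ j := by
        rw [sum_map, mul_sum]
        exact sum_congr rfl fun k hk => hnorm k (mem_of_mem_erase hk)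
    _ < c * 4⁻¹ ^ (k₀ : ℕ) := by
        gcongr
        apply sum_inv_four_pow_lt_of_subset_Ioo (n := n)
        intro j hj
        obtain ⟨k, hk, rfl⟩ := mem_map.mp hj
        have hle := hmin k (mem_of_mem_erase hk)
        have hne := Fin.val_injective.ne (ne_of_mem_erase hk)
        exact mem_Ioo.mpr ⟨by simp only [Fin.valEmbedding_apply]; omega, k.isLt⟩
    _ = ‖x k₀ ^ 2‖ := (hnorm k₀ hk₀S).symm
  exact this.false

theorem mul_zpow_sub_two_eq_of_mul_pow_sub_one_eq {K : Type*} [Field K] {d : ℕ} (hd : 1 ≤ d)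
    {a x lam : K} (hx : x ≠ 0) (h : a * x ^ (d - 1) = lam * x) :
    a * x ^ ((d : ℤ) - 2) = lam := by
  refine mul_right_cancel₀ hx ?_
  rw [mul_assoc, ← zpow_add_one₀ hx, ← h, ← zpow_natCast, Nat.cast_sub hd]
  ring_nf

theorem two_pow_mul_norm_eq_of_two_zpow_pow_mul_zpow_eq {𝕜 : Type*} [RCLike 𝕜] {m : ℤ}
    (hm : m ≠ 0) {c y z : 𝕜} (hc : c ≠ 0) {i j : ℕ}
    (h : c * ((2 : 𝕜) ^ m) ^ i * y ^ m = c * ((2 : 𝕜) ^ m) ^ j * z ^ m) :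
    2 ^ i * ‖y‖ = 2 ^ j * ‖z‖ := by
  have key : ∀ (l : ℕ) (w : 𝕜), ((2 : 𝕜) ^ m) ^ l * w ^ m = (2 ^ l * w) ^ m := fun l w => by
    rw [mul_zpow, ← zpow_natCast, ← _root_.zpow_mul, mul_comm m, _root_.zpow_mul, zpow_natCast]
  rw [mul_assoc, mul_assoc, key, key] at h
  have := congrArg norm (mul_left_cancel₀ hc h)
  simp only [norm_zpow, norm_mul, norm_pow, RCLike.norm_two] at this
  exact (zpow_left_inj₀ (by positivity) (by positivity) hm).mp this

/-- For `d ≥ 1`, `d ≠ 2`, `α = 2^{d-2}` and `p(x) = α x₁^d + α² x₂^d + ⋯ + αⁿ xₙ^d`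
on `ℂⁿ` (so `∇p(x)ₖ = d α^k xₖ^{d-1}` and `∇²p(x) = diag(d(d-1) α^k xₖ^{d-2})`),
there are no `x* ≠ 0` and `λ* ∈ ℂ` with `∇p(x*) = λ* x*` and `det H(x*, λ*) = 0`,
where `H(x,λ) = [[∇²p(x) - λ Iₙ, x],[xᵀ, 0]]`. -/
theorem stmt5 (n d : ℕ) (hd1 : 1 ≤ d) (hd2 : d ≠ 2) :
    ¬ ∃ (x : Fin n → ℂ) (lam : ℂ), x ≠ 0 ∧
      (∀ k : Fin n,
        (d : ℂ) * ((2 : ℂ) ^ ((d : ℤ) - 2)) ^ ((k : ℕ) + 1) * x k ^ (d - 1)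
          = lam * x k) ∧
      Matrix.det (Matrix.fromBlocks
        (Matrix.diagonal (fun k : Fin n =>
            (d : ℂ) * ((d : ℂ) - 1) * ((2 : ℂ) ^ ((d : ℤ) - 2)) ^ ((k : ℕ) + 1)
              * x k ^ ((d : ℤ) - 2))
          - lam • (1 : Matrix (Fin n) (Fin n) ℂ))
        (Matrix.of fun (i : Fin n) (_ : Unit) => x i)
        (Matrix.of fun (_ : Unit) (j : Fin n) => x j)
        (0 : Matrix Unit Unit ℂ)) = 0 := by
  rintro ⟨x, lam, hx, heig, hdet⟩
  set α : ℂ := 2 ^ ((d : ℤ) - 2)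
  have hd : (d : ℂ) ≠ 0 := Nat.cast_ne_zero.mpr (by omega)
  have hm : (d : ℤ) - 2 ≠ 0 := by omega
  have hcrit : ∀ k : Fin n, x k ≠ 0 → d * α ^ ((k : ℕ) + 1) * x k ^ ((d : ℤ) - 2) = lam :=
    fun k hk => mul_zpow_sub_two_eq_of_mul_pow_sub_one_eq hd1 hk (heig k)
  obtain ⟨k₀, hk₀⟩ : ∃ k, x k ≠ 0 := Function.ne_iff.mp hx
  have hlam : lam ≠ 0 := hcrit k₀ hk₀ ▸ by simp [α, hd, hk₀, zpow_ne_zero]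
  have hc : (d - 2 : ℂ) * lam ≠ 0 := mul_ne_zero (sub_ne_zero.mpr (by exact_mod_cast hd2)) hlam
  rw [smul_one_eq_diagonal, diagonal_sub] at hdet
  set g : Fin n → ℂ := fun k => d * (d - 1) * α ^ ((k : ℕ) + 1) * x k ^ ((d : ℤ) - 2) - lam
  have hg_supp : ∀ k, x k ≠ 0 → g k = (d - 2) * lam := fun k hk => by
    linear_combination (d - 1 : ℂ) * hcrit k hk
  have hg : ∀ k, g k ≠ 0 := fun k => by
    by_cases hk : x k = 0
    · simp [g, hk, _root_.zero_zpow _ hm, hlam]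
    · exact hg_supp k hk ▸ hc
  rw [det_fromBlocks_diagonal_eq_zero_iff hg, sum_mul_self_div_eq_of_eq_on_support hg_supp,
    div_eq_zero_iff, or_iff_left hc] at hdet
  refine Fin.sum_sq_ne_zero_of_two_pow_mul_norm_eq hx (fun j k hj hk => ?_) hdet
  have := two_pow_mul_norm_eq_of_two_zpow_pow_mul_zpow_eq hm hd
    ((hcrit j hj).trans (hcrit k hk).symm)
  exact mul_right_cancel₀ two_ne_zero (by simpa only [pow_succ, mul_right_comm] using this)
end

section
/- Let A be a real symmetric n×n matrix with eigenvalues λ₁ ≤ λ₂ ≤ ⋯ ≤ λₙ and let f(x) = (1/2) x^T A x. Every point x* ∈ S^{n-1} satisfying the first and second order necessary optimality conditions for minimizing f on the sphere also satisfies the second order sufficient condition if and only if the smallest eigenvalue λ₁ of A is simple. -/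
/-!
Since `λ₁` is the least eigenvalue, `A - λ₁ I` is positive semidefinite, so `uᵀAu ≥ λ₁ |u|²`
with equality exactly on the `λ₁`-eigenspace `E`. A unit eigenvector `x` satisfying the second
order necessary condition has multiplier `λ₁`: otherwise a unit `λ₁`-eigenvector `v` is orthogonal
to `x`, and testing with `u = v` gives `λ ≤ λ₁`. Hence the sufficient condition fails at such an `x`
exactly when `E` contains a unit vector orthogonal to `x`, i.e. when `dim E ≥ 2`.
-/

open Matrix

namespace Matrix

section Eigen

variable {ι : Type*} [Fintype ι] {A : Matrix ι ι ℝ} {lam : ℝ}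

theorem mem_ker_toLin'_sub_smul_id_iff [DecidableEq ι] (c : ℝ) (w : ι → ℝ) :
    w ∈ LinearMap.ker (toLin' A - c • LinearMap.id) ↔ A *ᵥ w = c • w := by
  simp [sub_eq_zero]

theorem IsSymm.dotProduct_eq_zero_of_mulVec_eq_smul (hA : A.IsSymm) {x y : ι → ℝ} {a b : ℝ}
    (hx : A *ᵥ x = a • x) (hy : A *ᵥ y = b • y) (hab : a ≠ b) : x ⬝ᵥ y = 0 := by
  have h : a * (x ⬝ᵥ y) = b * (x ⬝ᵥ y) := by
    calc a * (x ⬝ᵥ y) = A *ᵥ x ⬝ᵥ y := by rw [hx, smul_dotProduct, smul_eq_mul]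
      _ = x ⬝ᵥ A *ᵥ y := by rw [dotProduct_mulVec, ← mulVec_transpose, hA.eq]
      _ = b * (x ⬝ᵥ y) := by rw [hy, dotProduct_smul, smul_eq_mul]
  exact (mul_eq_mul_right_iff.mp h).resolve_left hab

variable [DecidableEq ι]

theorem IsSymm.posSemidef_sub_smul_one (hA : A.IsSymm)
    (hmin : ∀ (μ : ℝ) (v : ι → ℝ), v ≠ 0 → A *ᵥ v = μ • v → lam ≤ μ) :
    (A - lam • 1).PosSemidef := by
  have hB : (A - lam • 1).IsHermitian := by
    simp [isHermitian_iff_isSymm, IsSymm, transpose_sub, hA.eq]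
  refine hB.posSemidef_iff_eigenvalues_nonneg.mpr fun i => ?_
  have hw0 : ⇑(hB.eigenvectorBasis i) ≠ 0 := by
    simpa using hB.eigenvectorBasis.orthonormal.ne_zero i
  have hAw : A *ᵥ hB.eigenvectorBasis i = (hB.eigenvalues i + lam) • hB.eigenvectorBasis i := by
    have h := hB.mulVec_eigenvectorBasis i
    rw [sub_mulVec, smul_mulVec, one_mulVec] at h
    rw [add_smul, ← h, sub_add_cancel]
  show 0 ≤ hB.eigenvalues i
  linarith [hmin _ _ hw0 hAw]

theorem IsSymm.mul_dotProduct_self_le (hA : A.IsSymm)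
    (hmin : ∀ (μ : ℝ) (v : ι → ℝ), v ≠ 0 → A *ᵥ v = μ • v → lam ≤ μ) (u : ι → ℝ) :
    lam * (u ⬝ᵥ u) ≤ u ⬝ᵥ A *ᵥ u := by
  have h := (hA.posSemidef_sub_smul_one hmin).dotProduct_mulVec_nonneg u
  rw [star_trivial, sub_mulVec, smul_mulVec, one_mulVec, dotProduct_sub, dotProduct_smul,
    smul_eq_mul] at h
  linarith

theorem IsSymm.mulVec_eq_smul_of_dotProduct_mulVec_eq (hA : A.IsSymm)
    (hmin : ∀ (μ : ℝ) (v : ι → ℝ), v ≠ 0 → A *ᵥ v = μ • v → lam ≤ μ) {u : ι → ℝ}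
    (h : u ⬝ᵥ A *ᵥ u = lam * (u ⬝ᵥ u)) : A *ᵥ u = lam • u := by
  have h0 : star u ⬝ᵥ (A - lam • 1) *ᵥ u = 0 := by
    rw [star_trivial, sub_mulVec, smul_mulVec, one_mulVec, dotProduct_sub, dotProduct_smul,
      smul_eq_mul, h, sub_self]
  rw [(hA.posSemidef_sub_smul_one hmin).dotProduct_mulVec_zero_iff, sub_mulVec, smul_mulVec,
    one_mulVec, sub_eq_zero] at h0
  exact h0

end Eigen

theorem finrank_eq_one_iff_forall_dotProduct_eq_zero {𝕜 ι : Type*} [Field 𝕜] [LinearOrder 𝕜]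
    [IsStrictOrderedRing 𝕜] [Fintype ι] {K : Submodule 𝕜 (ι → 𝕜)} {v : ι → 𝕜} (hvK : v ∈ K)
    (hv : v ≠ 0) : Module.finrank 𝕜 K = 1 ↔ ∀ u ∈ K, u ⬝ᵥ v = 0 → u = 0 := by
  have hvv : v ⬝ᵥ v ≠ 0 := fun h => hv (dotProduct_self_eq_zero.mp h)
  have hspan : 𝕜 ∙ v ≤ K := (Submodule.span_singleton_le_iff_mem v K).mpr hvK
  constructor
  · intro hK u huK huv
    have hKv : 𝕜 ∙ v = K :=
      Submodule.eq_of_le_of_finrank_le hspan (by rw [hK, finrank_span_singleton hv])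
    obtain ⟨c, rfl⟩ := Submodule.mem_span_singleton.mp (hKv ▸ huK)
    rw [smul_dotProduct, smul_eq_mul, mul_eq_zero] at huv
    simp [huv.resolve_right hvv]
  · intro H
    -- the component of `u ∈ K` orthogonal to `v` vanishes, so `K = 𝕜 ∙ v`
    have hKv : K ≤ 𝕜 ∙ v := fun u huK => by
      have hproj := H (u - ((u ⬝ᵥ v) / (v ⬝ᵥ v)) • v) (K.sub_mem huK (K.smul_mem _ hvK))
        (by rw [sub_dotProduct, smul_dotProduct, smul_eq_mul, div_mul_cancel₀ _ hvv, sub_self])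
      rw [sub_eq_zero] at hproj
      exact hproj ▸ Submodule.smul_mem _ _ (Submodule.mem_span_singleton_self v)
    rw [le_antisymm hKv hspan, finrank_span_singleton hv]

theorem exists_smul_dotProduct_self_eq_one {ι : Type*} [Fintype ι] {u : ι → ℝ} (hu : u ≠ 0) :
    ∃ c : ℝ, (c • u) ⬝ᵥ (c • u) = 1 := by
  have hpos : 0 < u ⬝ᵥ u := by simpa using dotProduct_star_self_pos_iff.mpr hu
  refine ⟨(Real.sqrt (u ⬝ᵥ u))⁻¹, ?_⟩
  rw [smul_dotProduct, dotProduct_smul, smul_eq_mul, smul_eq_mul, ← mul_assoc,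
    ← mul_inv, Real.mul_self_sqrt hpos.le, inv_mul_cancel₀ hpos.ne']

section SecondOrder

variable {ι : Type*} [Fintype ι]

def SecondOrderNecessary (A : Matrix ι ι ℝ) (x : ι → ℝ) (lam : ℝ) : Prop :=
  ∀ u : ι → ℝ, u ⬝ᵥ u = 1 → u ⬝ᵥ x = 0 → lam ≤ u ⬝ᵥ A *ᵥ u

def SecondOrderSufficient (A : Matrix ι ι ℝ) (x : ι → ℝ) (lam : ℝ) : Prop :=
  ∀ u : ι → ℝ, u ⬝ᵥ u = 1 → u ⬝ᵥ x = 0 → lam < u ⬝ᵥ A *ᵥ u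

variable {A : Matrix ι ι ℝ} {lam1 : ℝ} {v : ι → ℝ}

theorem IsSymm.eq_of_secondOrderNecessary (hA : A.IsSymm)
    (hmin : ∀ (μ : ℝ) (v : ι → ℝ), v ≠ 0 → A *ᵥ v = μ • v → lam1 ≤ μ)
    (hv : v ⬝ᵥ v = 1) (hAv : A *ᵥ v = lam1 • v) {x : ι → ℝ} {lam : ℝ} (hx : x ≠ 0)
    (hAx : A *ᵥ x = lam • x) (hnec : SecondOrderNecessary A x lam) : lam = lam1 := by
  by_contra hne
  have hle := hnec v hv (hA.dotProduct_eq_zero_of_mulVec_eq_smul hAv hAx (Ne.symm hne))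
  rw [hAv, dotProduct_smul, smul_eq_mul, hv, mul_one] at hle
  exact hne (le_antisymm hle (hmin lam x hx hAx))

variable [DecidableEq ι]

theorem IsSymm.secondOrderNecessary (hA : A.IsSymm)
    (hmin : ∀ (μ : ℝ) (v : ι → ℝ), v ≠ 0 → A *ᵥ v = μ • v → lam1 ≤ μ) (x : ι → ℝ) :
    SecondOrderNecessary A x lam1 := fun u hu _ => by
  simpa [hu] using hA.mul_dotProduct_self_le hmin u

theorem IsSymm.finrank_eq_one_of_forall_secondOrderSufficient (hA : A.IsSymm)
    (hmin : ∀ (μ : ℝ) (v : ι → ℝ), v ≠ 0 → A *ᵥ v = μ • v → lam1 ≤ μ)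
    (hv : v ⬝ᵥ v = 1) (hAv : A *ᵥ v = lam1 • v)
    (H : ∀ (x : ι → ℝ) (lam : ℝ), x ⬝ᵥ x = 1 → A *ᵥ x = lam • x →
      SecondOrderNecessary A x lam → SecondOrderSufficient A x lam) :
    Module.finrank ℝ (LinearMap.ker (toLin' A - lam1 • LinearMap.id)) = 1 := by
  have hv0 : v ≠ 0 := fun h => by simp [h] at hv
  rw [finrank_eq_one_iff_forall_dotProduct_eq_zero ((mem_ker_toLin'_sub_smul_id_iff _ _).mpr hAv)
    hv0]
  intro u huK huv
  by_contra hu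
  obtain ⟨c, hc⟩ := exists_smul_dotProduct_self_eq_one hu
  have hAcu : A *ᵥ (c • u) = lam1 • (c • u) :=
    (mem_ker_toLin'_sub_smul_id_iff _ _).mp (Submodule.smul_mem _ c huK)
  have hlt := H v lam1 hv hAv (hA.secondOrderNecessary hmin v) (c • u) hc
    (by rw [smul_dotProduct, huv, smul_zero])
  rw [hAcu, dotProduct_smul, smul_eq_mul, hc, mul_one] at hlt
  exact lt_irrefl _ hlt

theorem IsSymm.secondOrderSufficient_of_finrank_eq_one (hA : A.IsSymm)
    (hmin : ∀ (μ : ℝ) (v : ι → ℝ), v ≠ 0 → A *ᵥ v = μ • v → lam1 ≤ μ)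
    (hv : v ⬝ᵥ v = 1) (hAv : A *ᵥ v = lam1 • v)
    (hE : Module.finrank ℝ (LinearMap.ker (toLin' A - lam1 • LinearMap.id)) = 1)
    {x : ι → ℝ} {lam : ℝ} (hx : x ⬝ᵥ x = 1) (hAx : A *ᵥ x = lam • x)
    (hnec : SecondOrderNecessary A x lam) : SecondOrderSufficient A x lam := by
  have hx0 : x ≠ 0 := fun h => by simp [h] at hx
  obtain rfl := hA.eq_of_secondOrderNecessary hmin hv hAv hx0 hAx hnec
  intro u hu hux
  rcases (hA.mul_dotProduct_self_le hmin u).lt_or_eq with hlt | heq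
  · simpa [hu] using hlt
  · have hAu := hA.mulVec_eq_smul_of_dotProduct_mulVec_eq hmin heq.symm
    have hu0 := (finrank_eq_one_iff_forall_dotProduct_eq_zero
      ((mem_ker_toLin'_sub_smul_id_iff _ _).mpr hAx) hx0).mp hE u
      ((mem_ker_toLin'_sub_smul_id_iff _ _).mpr hAu) hux
    simp [hu0] at hu

end SecondOrder

end Matrix

/-- For `f(x) = (1/2)xᵀAx` with `A` real symmetric with smallest eigenvalue `λ₁`:
every point of the unit sphere satisfying the first and second order necessary
optimality conditions also satisfies the second order sufficient condition
if and only if `λ₁` is a simple eigenvalue. -/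
theorem stmt8 (n : ℕ) (A : Matrix (Fin n) (Fin n) ℝ) (hA : A.IsSymm) (lam1 : ℝ)
    (hmem : ∃ v : Fin n → ℝ, v ⬝ᵥ v = 1 ∧ A.mulVec v = lam1 • v)
    (hmin : ∀ (μ : ℝ) (v : Fin n → ℝ), v ≠ 0 → A.mulVec v = μ • v → lam1 ≤ μ) :
    (∀ (x : Fin n → ℝ) (lam : ℝ), x ⬝ᵥ x = 1 → A.mulVec x = lam • x →
        (∀ u : Fin n → ℝ, u ⬝ᵥ u = 1 → u ⬝ᵥ x = 0 → lam ≤ u ⬝ᵥ A.mulVec u) →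
        (∀ u : Fin n → ℝ, u ⬝ᵥ u = 1 → u ⬝ᵥ x = 0 → lam < u ⬝ᵥ A.mulVec u))
      ↔ Module.finrank ℝ
          (LinearMap.ker (Matrix.toLin' A - lam1 • LinearMap.id)) = 1 := by
  obtain ⟨v, hv, hAv⟩ := hmem
  exact ⟨hA.finrank_eq_one_of_forall_secondOrderSufficient hmin hv hAv,
    fun hE _ _ hx hAx => hA.secondOrderSufficient_of_finrank_eq_one hmin hv hAv hE hx hAx⟩
end

section
/- Let f : ℝ^n → ℝ be a homogeneous polynomial of degree d and suppose that for no pair (x, y) ∈ ℂ^n × ℂ^n with x ≠ 0, y ≠ 0 the system y^T x = 0 and rank [[∇f(x), x, 0],[∇²f(x)y, y, x]] ≤ 2 is satisfiable. Then every point x* ∈ S^{n-1} satisfying the first and second order necessary optimality conditions for min f over S^{n-1} satisfies the second order sufficient condition, and hence is a local minimizer of f on S^{n-1}. -/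
/-!
Suppose the second-order necessary condition holds but `uᵀ∇²f(x)u = λ` for some unit `u ⊥ x`.
Then `u` minimises the nonnegative form `wᵀ(∇²f(x) - λI)w` on `x⊥`, so `(∇²f(x) - λI)u = c x`.
Together with `∇f(x) = λx` this puts `(1, -λ, -c)` in the kernel of
`[[∇f(x), x, 0], [∇²f(x)u, u, x]]`, whose rank is then at most 2, which the hypothesis excludes.

For the local minimum, restrict `f` to the great circles `t ↦ cos t • x + sin t • u`: the first
derivative vanishes at `t = 0` and the second derivative there is `uᵀ∇²f(x)u - λ > 0`. Since the
unit tangent vectors form a compact set, the second derivative stays positive for `|t| < δ`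
uniformly in `u`, so `f` increases along every such arc, and these arcs cover a neighbourhood of
`x` in the sphere.
-/

open MvPolynomial Finset Matrix Filter Topology

theorem HasDerivAt.dotProduct {ι : Type*} [Fintype ι] {a b : ℝ → ι → ℝ} {a' b' : ι → ℝ} {t : ℝ}
    (ha : HasDerivAt a a' t) (hb : HasDerivAt b b' t) :
    HasDerivAt (fun s => a s ⬝ᵥ b s) (a' ⬝ᵥ b t + a t ⬝ᵥ b') t := by
  have h := HasDerivAt.fun_sum fun i (_ : i ∈ univ) =>
    (hasDerivAt_pi.1 ha i).fun_mul (hasDerivAt_pi.1 hb i)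
  exact h.congr_deriv sum_add_distrib

theorem isMinOn_ball_of_deriv2_nonneg {φ φ' φ'' : ℝ → ℝ} {a δ : ℝ}
    (hφ : ∀ t, HasDerivAt φ (φ' t) t) (hφ' : ∀ t, HasDerivAt φ' (φ'' t) t) (ha : φ' a = 0)
    (hφ'' : ∀ t ∈ Metric.ball a δ, 0 ≤ φ'' t) : IsMinOn φ (Metric.ball a δ) a := by
  intro t ht
  have hconv : ConvexOn ℝ (Metric.ball a δ) φ := by
    refine convexOn_of_hasDerivWithinAt2_nonneg (convex_ball a δ)
      (fun s _ => (hφ s).continuousAt.continuousWithinAt) (fun s _ => (hφ s).hasDerivWithinAt)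
      (fun s _ => (hφ' s).hasDerivWithinAt) ?_
    rwa [Metric.isOpen_ball.interior_eq]
  have hmem : a ∈ interior (Metric.ball a δ) := by
    rw [Metric.isOpen_ball.interior_eq]
    exact Metric.mem_ball_self (Metric.pos_of_mem_ball ht)
  refine hconv.isMinOn_of_rightDeriv_eq_zero hmem ?_ ht
  rw [((hφ a).hasDerivWithinAt.derivWithin (uniqueDiffWithinAt_Ioi a)), ha]

namespace Matrix

variable {n 𝕜 : Type*} [Fintype n] [Field 𝕜] [LinearOrder 𝕜] [IsStrictOrderedRing 𝕜]

theorem exists_eq_smul_of_forall_dotProduct_eq_zero {x r : n → 𝕜}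
    (h : ∀ w, w ⬝ᵥ x = 0 → w ⬝ᵥ r = 0) : ∃ c : 𝕜, r = c • x := by
  set c := (r ⬝ᵥ x) / (x ⬝ᵥ x)
  refine ⟨c, ?_⟩
  have hwx : (r - c • x) ⬝ᵥ x = 0 := by
    rcases eq_or_ne x 0 with rfl | hx
    · simp
    · have : x ⬝ᵥ x ≠ 0 := by rwa [Ne, dotProduct_self_eq_zero]
      simp [sub_dotProduct, c, this]
  have hww : (r - c • x) ⬝ᵥ (r - c • x) = 0 := by
    rw [dotProduct_sub, dotProduct_smul, h _ hwx, hwx, smul_zero, sub_zero]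
  exact (sub_eq_zero.1 (dotProduct_self_eq_zero.1 hww))

theorem exists_mulVec_eq_smul_of_dotProduct_mulVec_eq_zero {A : Matrix n n 𝕜} (hA : A.IsSymm)
    {x u : n → 𝕜} (hA_nonneg : ∀ w, w ⬝ᵥ x = 0 → 0 ≤ w ⬝ᵥ A *ᵥ w) (hux : u ⬝ᵥ x = 0)
    (hu : u ⬝ᵥ A *ᵥ u = 0) : ∃ c : 𝕜, A *ᵥ u = c • x := by
  refine exists_eq_smul_of_forall_dotProduct_eq_zero fun w hwx => ?_
  -- `t ↦ (u + t w)ᵀ A (u + t w)` is a nonnegative quadratic polynomial without constant term.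
  have hquad : ∀ t : 𝕜, 0 ≤ (w ⬝ᵥ A *ᵥ w) * (t * t) + 2 * (w ⬝ᵥ A *ᵥ u) * t + 0 := by
    intro t
    have := hA_nonneg (u + t • w) (by simp [add_dotProduct, hux, hwx])
    have hsymm : u ⬝ᵥ A *ᵥ w = w ⬝ᵥ A *ᵥ u := by
      rw [dotProduct_mulVec, ← mulVec_transpose, hA.eq, dotProduct_comm]
    simp only [mulVec_add, mulVec_smul, add_dotProduct, dotProduct_add, smul_dotProduct,
      dotProduct_smul, hu, hsymm, smul_eq_mul] at this
    linarith
  have := discrim_le_zero hquad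
  rw [discrim] at this
  nlinarith [sq_nonneg (w ⬝ᵥ A *ᵥ u)]

theorem rank_lt_card_of_mulVec_eq_zero {m K : Type*} [Fintype m] [Field K] (M : Matrix m n K)
    {v : n → K} (hv : v ≠ 0) (h : M *ᵥ v = 0) : M.rank < Fintype.card n := by
  have hker : 0 < Module.finrank K (LinearMap.ker M.mulVecLin) :=
    Module.finrank_pos_iff_exists_ne_zero.2 ⟨⟨v, h⟩, fun h0 => hv (congrArg Subtype.val h0)⟩
  have := LinearMap.finrank_range_add_finrank_ker M.mulVecLin
  rw [Module.finrank_fintype_fun_eq_card] at this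
  rw [rank]
  omega

theorem dotProduct_self_nonneg (v : n → 𝕜) : 0 ≤ v ⬝ᵥ v :=
  sum_nonneg fun i _ => mul_self_nonneg (v i)

theorem mul_dotProduct_self_le_of_forall_unit {H : Matrix n n ℝ} {x : n → ℝ} {lam : ℝ}
    (hH : ∀ u, u ⬝ᵥ u = 1 → u ⬝ᵥ x = 0 → lam ≤ u ⬝ᵥ H *ᵥ u) {w : n → ℝ} (hwx : w ⬝ᵥ x = 0) :
    lam * (w ⬝ᵥ w) ≤ w ⬝ᵥ H *ᵥ w := by
  rcases eq_or_ne w 0 with rfl | hw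
  · simp
  have hpos : 0 < w ⬝ᵥ w := (dotProduct_self_nonneg w).lt_of_ne' (by simpa using hw)
  set r := √(w ⬝ᵥ w)
  have hr : r ^ 2 = w ⬝ᵥ w := Real.sq_sqrt hpos.le
  have hunit : (r⁻¹ • w) ⬝ᵥ (r⁻¹ • w) = 1 := by
    simp only [smul_dotProduct, dotProduct_smul, smul_eq_mul, ← mul_assoc, ← sq, inv_pow, hr]
    exact inv_mul_cancel₀ hpos.ne'
  have := hH _ hunit (by simp [hwx])
  simp only [mulVec_smul, smul_dotProduct, dotProduct_smul, smul_eq_mul, ← mul_assoc, ← sq,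
    inv_pow, hr] at this
  rwa [le_inv_mul_iff₀ hpos, mul_comm] at this

end Matrix

section GreatCircle

variable {σ : Type*}

noncomputable def greatCircle (x u : σ → ℝ) (t : ℝ) : σ → ℝ :=
  Real.cos t • x + Real.sin t • u

@[simp]
theorem greatCircle_zero (x u : σ → ℝ) : greatCircle x u 0 = x := by
  simp [greatCircle]

theorem greatCircle_neg (x u : σ → ℝ) (t : ℝ) :
    greatCircle (-x) (-u) t = -greatCircle x u t := by
  simp [greatCircle, add_comm]

variable [Fintype σ]

theorem hasDerivAt_greatCircle (x u : σ → ℝ) (t : ℝ) :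
    HasDerivAt (greatCircle x u) (greatCircle u (-x) t) t := by
  refine (((Real.hasDerivAt_cos t).smul_const x).add
    ((Real.hasDerivAt_sin t).smul_const u)).congr_deriv ?_
  simp [greatCircle, add_comm]

theorem isCompact_setOf_dotProduct_self_eq_one : IsCompact {u : σ → ℝ | u ⬝ᵥ u = 1} := by
  refine Metric.isCompact_of_isClosed_isBounded (isClosed_eq (by fun_prop) continuous_const) ?_
  refine (Metric.isBounded_iff_subset_closedBall 0).2 ⟨1, fun u hu => ?_⟩
  rw [mem_closedBall_zero_iff, pi_norm_le_iff_of_nonneg zero_le_one]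
  intro i
  rw [Real.norm_eq_abs, ← sq_le_one_iff_abs_le_one, sq, ← hu.out]
  exact single_le_sum (f := fun j => u j * u j) (fun j _ => mul_self_nonneg (u j)) (mem_univ i)

theorem exists_greatCircle_arccos_eq {x z : σ → ℝ} (hx : x ⬝ᵥ x = 1) (hz : z ⬝ᵥ z = 1)
    (hzx : (z ⬝ᵥ x) ^ 2 < 1) :
    ∃ u : σ → ℝ, u ⬝ᵥ u = 1 ∧ u ⬝ᵥ x = 0 ∧ greatCircle x u (Real.arccos (z ⬝ᵥ x)) = z := by
  set a := z ⬝ᵥ x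
  set ρ := √(1 - a ^ 2)
  have hρ : 0 < ρ := Real.sqrt_pos.2 (by linarith)
  have hρ2 : ρ ^ 2 = 1 - a ^ 2 := Real.sq_sqrt (by linarith)
  have hxz : x ⬝ᵥ z = a := dotProduct_comm x z
  refine ⟨ρ⁻¹ • (z - a • x), ?_, ?_, ?_⟩
  · simp only [smul_dotProduct, dotProduct_smul, sub_dotProduct, dotProduct_sub, hx, hz, hxz,
      smul_eq_mul]
    field_simp
    linarith
  · simp [sub_dotProduct, hx, a]
  · have hcos : Real.cos (Real.arccos a) = a :=
      Real.cos_arccos (by nlinarith) (by nlinarith)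
    rw [greatCircle, hcos, Real.sin_arccos, smul_smul, mul_inv_cancel₀ hρ.ne', one_smul]
    abel

end GreatCircle

namespace MvPolynomial

variable {σ : Type*}

theorem pderiv_pderiv_comm {R : Type*} [CommSemiring R] (i j : σ) (p : MvPolynomial σ R) :
    pderiv i (pderiv j p) = pderiv j (pderiv i p) := by
  induction p using MvPolynomial.induction_on with
  | C a => simp
  | add p q hp hq => simp [hp, hq]
  | mul_X p k hp =>
    classical
    simp only [Derivation.leibniz, pderiv_X, smul_eq_mul, map_add, hp, Pi.single_apply]
    split_ifs <;> simp [add_comm, add_left_comm]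

noncomputable def gradientAt (p : MvPolynomial σ ℝ) (x : σ → ℝ) : σ → ℝ :=
  fun i => eval x (pderiv i p)

noncomputable def hessianAt (p : MvPolynomial σ ℝ) (x : σ → ℝ) : Matrix σ σ ℝ :=
  Matrix.of fun i j => eval x (pderiv i (pderiv j p))

theorem hessianAt_isSymm (p : MvPolynomial σ ℝ) (x : σ → ℝ) : (hessianAt p x).IsSymm :=
  Matrix.IsSymm.ext fun i j => by simp [hessianAt, pderiv_pderiv_comm i j]

theorem aeval_ofReal_comp (p : MvPolynomial σ ℝ) (x : σ → ℝ) :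
    aeval (Complex.ofReal ∘ x) p = eval x p := by
  simpa using aeval_algebraMap_apply ℂ x p

variable [Fintype σ]

theorem dotProduct_hessianAt_mulVec (p : MvPolynomial σ ℝ) (x u : σ → ℝ) :
    u ⬝ᵥ hessianAt p x *ᵥ u = ∑ i, ∑ j, u i * eval x (pderiv i (pderiv j p)) * u j := by
  simp [dotProduct, Matrix.mulVec, hessianAt, mul_sum, mul_assoc]

theorem hasDerivAt_eval_comp (p : MvPolynomial σ ℝ) {γ : ℝ → σ → ℝ} {γ' : σ → ℝ} {t : ℝ}
    (hγ : HasDerivAt γ γ' t) :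
    HasDerivAt (fun s => eval (γ s) p) (gradientAt p (γ t) ⬝ᵥ γ') t := by
  induction p using MvPolynomial.induction_on with
  | C a => simpa [gradientAt, dotProduct] using hasDerivAt_const t a
  | add p q hp hq => simpa [gradientAt, dotProduct, add_mul, sum_add_distrib] using hp.fun_add hq
  | mul_X p k hp =>
    classical
    simp only [map_mul, eval_X]
    refine (hp.fun_mul (hasDerivAt_pi.1 hγ k)).congr_deriv ?_
    simp [gradientAt, dotProduct, Pi.single_apply, mul_add, sum_add_distrib, mul_sum, add_comm,
      mul_comm, mul_left_comm, apply_ite (eval (γ t)), mul_ite]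

theorem hasDerivAt_gradientAt_comp (p : MvPolynomial σ ℝ) {γ : ℝ → σ → ℝ} {γ' : σ → ℝ} {t : ℝ}
    (hγ : HasDerivAt γ γ' t) :
    HasDerivAt (fun s => gradientAt p (γ s)) (hessianAt p (γ t) *ᵥ γ') t :=
  hasDerivAt_pi.2 fun i => by
    simpa [Matrix.mulVec, hessianAt, gradientAt, dotProduct, pderiv_pderiv_comm i]
      using hasDerivAt_eval_comp (pderiv i p) hγ

noncomputable def optimalityMatrix (f : MvPolynomial σ ℝ) (x y : σ → ℂ) :
    Matrix (σ ⊕ σ) (Fin 3) ℂ :=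
  Matrix.of (Sum.elim (fun i => ![aeval x (pderiv i f), x i, 0])
    (fun i => ![∑ j, aeval x (pderiv i (pderiv j f)) * y j, y i, x i]))

theorem optimalityMatrix_mulVec_eq_zero (f : MvPolynomial σ ℝ) {x u : σ → ℝ} {lam c : ℝ}
    (hgrad : gradientAt f x = lam • x) (hhess : hessianAt f x *ᵥ u = lam • u + c • x) :
    optimalityMatrix f (Complex.ofReal ∘ x) (Complex.ofReal ∘ u) *ᵥ ![1, -(lam : ℂ), -(c : ℂ)]
      = 0 := by
  funext r
  rcases r with i | i
  · have h := congrArg Complex.ofReal (congrFun hgrad i)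
    simp only [gradientAt, Pi.smul_apply, smul_eq_mul, Complex.ofReal_mul] at h
    simp only [optimalityMatrix, mulVec, dotProduct, Fin.sum_univ_three, of_apply, Sum.elim_inl,
      Function.comp_apply, aeval_ofReal_comp, cons_val_zero, cons_val_one, Matrix.cons_val,
      Pi.zero_apply]
    linear_combination h
  · have h := congrArg Complex.ofReal (congrFun hhess i)
    simp only [hessianAt, mulVec, dotProduct, of_apply, Pi.add_apply, Pi.smul_apply, smul_eq_mul,
      Complex.ofReal_sum, Complex.ofReal_mul, Complex.ofReal_add] at h
    simp only [optimalityMatrix, mulVec, dotProduct, Fin.sum_univ_three, of_apply, Sum.elim_inr,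
      Function.comp_apply, aeval_ofReal_comp, cons_val_zero, cons_val_one, Matrix.cons_val,
      Pi.zero_apply]
    linear_combination h

theorem lt_dotProduct_hessianAt_mulVec (f : MvPolynomial σ ℝ)
    (hno : ¬ ∃ x y : σ → ℂ, x ≠ 0 ∧ y ≠ 0 ∧ ∑ i, y i * x i = 0 ∧
      (optimalityMatrix f x y).rank ≤ 2)
    {x : σ → ℝ} {lam : ℝ} (hx : x ≠ 0) (hgrad : gradientAt f x = lam • x)
    (hsoc : ∀ w, w ⬝ᵥ x = 0 → lam * (w ⬝ᵥ w) ≤ w ⬝ᵥ hessianAt f x *ᵥ w)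
    {u : σ → ℝ} (hu : u ≠ 0) (hux : u ⬝ᵥ x = 0) :
    lam * (u ⬝ᵥ u) < u ⬝ᵥ hessianAt f x *ᵥ u := by
  classical
  set A := hessianAt f x - lam • 1
  have hA : ∀ w, w ⬝ᵥ A *ᵥ w = w ⬝ᵥ hessianAt f x *ᵥ w - lam * (w ⬝ᵥ w) := fun w => by
    simp [A, sub_mulVec, dotProduct_sub, smul_mulVec, one_mulVec]
  refine (hsoc u hux).lt_of_ne fun heq => hno ?_
  obtain ⟨c, hc⟩ := exists_mulVec_eq_smul_of_dotProduct_mulVec_eq_zero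
    ((hessianAt_isSymm f x).sub (isSymm_one.smul lam)) (fun w hw => by linarith [hA w, hsoc w hw])
    hux (by linarith [hA u])
  have hhess : hessianAt f x *ᵥ u = lam • u + c • x := by
    rw [← hc]; simp [sub_mulVec, smul_mulVec, one_mulVec]
  have hofReal : ∀ v : σ → ℝ, v ≠ 0 → Complex.ofReal ∘ v ≠ 0 := by
    intro v hv h
    apply hv
    ext i
    simpa using congrFun h i
  refine ⟨_, _, hofReal x hx, hofReal u hu, ?_, ?_⟩
  · simp only [Function.comp_apply]
    exact_mod_cast hux
  · have := rank_lt_card_of_mulVec_eq_zero _ (by simp)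
      (optimalityMatrix_mulVec_eq_zero f hgrad hhess)
    simp only [Fintype.card_fin] at this
    omega

-- `γ'ᵀ ∇²f(γ) γ' + ∇f(γ) ⬝ γ''` for `γ = greatCircle x u`, whose second derivative is `-γ`.
noncomputable def secondDerivAlongGreatCircle (f : MvPolynomial σ ℝ) (x u : σ → ℝ) (t : ℝ) : ℝ :=
  greatCircle u (-x) t ⬝ᵥ hessianAt f (greatCircle x u t) *ᵥ greatCircle u (-x) t
    - gradientAt f (greatCircle x u t) ⬝ᵥ greatCircle x u t

theorem hasDerivAt_gradientAt_greatCircle_dotProduct (f : MvPolynomial σ ℝ) (x u : σ → ℝ)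
    (t : ℝ) :
    HasDerivAt (fun s => gradientAt f (greatCircle x u s) ⬝ᵥ greatCircle u (-x) s)
      (secondDerivAlongGreatCircle f x u t) t := by
  refine ((hasDerivAt_gradientAt_comp f (hasDerivAt_greatCircle x u t)).dotProduct
    (hasDerivAt_greatCircle u (-x) t)).congr_deriv ?_
  rw [greatCircle_neg, dotProduct_neg, dotProduct_comm (hessianAt _ _ *ᵥ _),
    secondDerivAlongGreatCircle, sub_eq_add_neg]

theorem continuous_secondDerivAlongGreatCircle (f : MvPolynomial σ ℝ) (x : σ → ℝ) :
    Continuous fun p : ℝ × (σ → ℝ) => secondDerivAlongGreatCircle f x p.2 p.1 := by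
  have hgrad : Continuous (gradientAt f) := continuous_pi fun i => continuous_eval _
  have hhess : Continuous (hessianAt f) :=
    continuous_pi fun i => continuous_pi fun j => continuous_eval _
  unfold secondDerivAlongGreatCircle greatCircle
  fun_prop

theorem exists_pos_forall_le_eval_greatCircle (f : MvPolynomial σ ℝ) {x : σ → ℝ} {lam : ℝ}
    (hx : x ⬝ᵥ x = 1) (hgrad : gradientAt f x = lam • x)
    (hstrict : ∀ u, u ⬝ᵥ u = 1 → u ⬝ᵥ x = 0 → lam < u ⬝ᵥ hessianAt f x *ᵥ u) :
    ∃ δ > 0, ∀ u, u ⬝ᵥ u = 1 → u ⬝ᵥ x = 0 → ∀ θ, |θ| < δ →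
      eval x f ≤ eval (greatCircle x u θ) f := by
  set K := {u : σ → ℝ | u ⬝ᵥ u = 1} ∩ {u | u ⬝ᵥ x = 0}
  have hK : IsCompact K :=
    isCompact_setOf_dotProduct_self_eq_one.inter_right (isClosed_eq (by fun_prop) continuous_const)
  have hpos : ∀ u ∈ K, 0 < secondDerivAlongGreatCircle f x u 0 := fun u hu => by
    simp [secondDerivAlongGreatCircle, hgrad, hx, hstrict u hu.1 hu.2]
  have hnear : ∀ᶠ t in 𝓝 (0 : ℝ), ∀ u ∈ K, 0 < secondDerivAlongGreatCircle f x u t :=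
    hK.eventually_forall_of_forall_eventually fun u hu =>
      ((continuous_secondDerivAlongGreatCircle f x).tendsto (0, u)).eventually
        (lt_mem_nhds (hpos u hu))
  obtain ⟨δ, hδ, hball⟩ := Metric.eventually_nhds_iff_ball.1 hnear
  refine ⟨δ, hδ, fun u hu hux θ hθ => ?_⟩
  have hmin := isMinOn_ball_of_deriv2_nonneg
    (fun t => hasDerivAt_eval_comp f (hasDerivAt_greatCircle x u t))
    (hasDerivAt_gradientAt_greatCircle_dotProduct f x u)
    (by simp [hgrad, dotProduct_comm x u, hux])
    (fun t ht => (hball t ht u ⟨hu, hux⟩).le)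
  simpa using hmin (show θ ∈ Metric.ball 0 δ by simpa using hθ)

theorem exists_pos_forall_le_eval_of_dotProduct_sub_lt (f : MvPolynomial σ ℝ) {x : σ → ℝ}
    {lam : ℝ} (hx : x ⬝ᵥ x = 1) (hgrad : gradientAt f x = lam • x)
    (hstrict : ∀ u, u ⬝ᵥ u = 1 → u ⬝ᵥ x = 0 → lam < u ⬝ᵥ hessianAt f x *ᵥ u) :
    ∃ ε > 0, ∀ z : σ → ℝ, z ⬝ᵥ z = 1 → (z - x) ⬝ᵥ (z - x) < ε → eval x f ≤ eval z f := by
  obtain ⟨δ, hδ, hmin⟩ := exists_pos_forall_le_eval_greatCircle f hx hgrad hstrict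
  -- For unit `z`, `|z - x|² = 2 - 2 cos θ` where `θ = arccos (z ⬝ᵥ x)` is the angle between them.
  have hnear : ∀ᶠ s in 𝓝 (0 : ℝ), s < 4 ∧ Real.arccos (1 - s / 2) < δ :=
    (eventually_lt_nhds (by norm_num)).and <|
      ((Real.continuous_arccos.comp (by fun_prop)).tendsto 0).eventually
        (gt_mem_nhds (by simpa using hδ))
  obtain ⟨ε, hε, hball⟩ := Metric.eventually_nhds_iff.1 hnear
  refine ⟨ε, hε, fun z hz hzε => ?_⟩
  have hdist : (z - x) ⬝ᵥ (z - x) = 2 - 2 * (z ⬝ᵥ x) := by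
    simp only [sub_dotProduct, dotProduct_sub, hz, hx, dotProduct_comm x z]
    ring
  obtain ⟨hlt4, hθ⟩ := hball (by
    rwa [Real.dist_eq, sub_zero, abs_of_nonneg (dotProduct_self_nonneg (z - x))])
  rw [hdist] at hlt4 hθ
  rw [show 1 - (2 - 2 * (z ⬝ᵥ x)) / 2 = z ⬝ᵥ x by ring] at hθ
  rcases (show z ⬝ᵥ x ≤ 1 by linarith [dotProduct_self_nonneg (z - x)]).eq_or_lt with h1 | h1
  · have hzx : z - x = 0 := dotProduct_self_eq_zero.1 (by rw [hdist, h1]; norm_num)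
    rw [sub_eq_zero.1 hzx]
  · obtain ⟨u, hu, hux, hzu⟩ := exists_greatCircle_arccos_eq hx hz (by nlinarith)
    rw [← hzu]
    exact hmin u hu hux _ (by rwa [abs_of_nonneg (Real.arccos_nonneg _)])

end MvPolynomial

theorem stmt19_general (n : ℕ) (f : MvPolynomial (Fin n) ℝ)
    (hno : ¬ ∃ x y : Fin n → ℂ, x ≠ 0 ∧ y ≠ 0 ∧
      (∑ i : Fin n, y i * x i = 0) ∧
      Matrix.rank (Matrix.of (Sum.elim
        (fun i : Fin n => ![aeval x (pderiv i f), x i, 0])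
        (fun i : Fin n =>
          ![∑ j : Fin n, aeval x (pderiv i (pderiv j f)) * y j, y i, x i]))) ≤ 2) :
    ∀ (xs : Fin n → ℝ) (lam : ℝ), (∑ i : Fin n, xs i ^ 2 = 1) →
      (∀ i : Fin n, eval xs (pderiv i f) = lam * xs i) →
      (∀ u : Fin n → ℝ, (∑ i : Fin n, u i ^ 2 = 1) → (∑ i : Fin n, u i * xs i = 0) →
        lam ≤ ∑ i : Fin n, ∑ j : Fin n, u i * eval xs (pderiv i (pderiv j f)) * u j) →
      ((∀ u : Fin n → ℝ, (∑ i : Fin n, u i ^ 2 = 1) → (∑ i : Fin n, u i * xs i = 0) →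
          lam < ∑ i : Fin n, ∑ j : Fin n, u i * eval xs (pderiv i (pderiv j f)) * u j) ∧
        ∃ ε : ℝ, 0 < ε ∧ ∀ z : Fin n → ℝ, (∑ i : Fin n, z i ^ 2 = 1) →
          (∑ i : Fin n, (z i - xs i) ^ 2 < ε) → eval xs f ≤ eval z f) := by
  intro xs lam hxs hfoc hsoc
  have hsq : ∀ v : Fin n → ℝ, ∑ i, v i ^ 2 = v ⬝ᵥ v := fun v => by simp [dotProduct, sq]
  simp only [hsq, ← dotProduct_hessianAt_mulVec] at hxs hsoc ⊢
  have hgrad : gradientAt f xs = lam • xs := funext hfoc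
  have hxs0 : xs ≠ 0 := by rintro rfl; simp at hxs
  have hstrict : ∀ u, u ⬝ᵥ u = 1 → u ⬝ᵥ xs = 0 → lam < u ⬝ᵥ hessianAt f xs *ᵥ u := by
    intro u hu hux
    have hu0 : u ≠ 0 := by rintro rfl; simp at hu
    simpa [hu] using lt_dotProduct_hessianAt_mulVec f hno hxs0 hgrad
      (fun w hw => mul_dotProduct_self_le_of_forall_unit hsoc hw) hu0 hux
  exact ⟨hstrict, exists_pos_forall_le_eval_of_dotProduct_sub_lt f hxs hgrad hstrict⟩

/-- Let `f` be a homogeneous polynomial of degree `d` on `ℝⁿ` and suppose no pair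
`(x, y) ∈ ℂⁿ × ℂⁿ` with `x ≠ 0`, `y ≠ 0` satisfies `yᵀx = 0` together with
`rank [[∇f(x), x, 0],[∇²f(x)y, y, x]] ≤ 2` (gradient and Hessian extended to `ℂⁿ`).
Then every `x* ∈ S^{n-1}` satisfying the first and second order necessary
optimality conditions for `min f` over `S^{n-1}` satisfies the second order
sufficient condition, and hence is a local minimizer of `f` on `S^{n-1}`. -/
theorem stmt19 (n d : ℕ) (f : MvPolynomial (Fin n) ℝ)
    (hhom : f.IsHomogeneous d)
    (hno : ¬ ∃ x y : Fin n → ℂ, x ≠ 0 ∧ y ≠ 0 ∧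
      (∑ i : Fin n, y i * x i = 0) ∧
      Matrix.rank (Matrix.of (Sum.elim
        (fun i : Fin n => ![aeval x (pderiv i f), x i, 0])
        (fun i : Fin n =>
          ![∑ j : Fin n, aeval x (pderiv i (pderiv j f)) * y j, y i, x i]))) ≤ 2) :
    ∀ (xs : Fin n → ℝ) (lam : ℝ), (∑ i : Fin n, xs i ^ 2 = 1) →
      (∀ i : Fin n, eval xs (pderiv i f) = lam * xs i) →
      (∀ u : Fin n → ℝ, (∑ i : Fin n, u i ^ 2 = 1) → (∑ i : Fin n, u i * xs i = 0) →
        lam ≤ ∑ i : Fin n, ∑ j : Fin n, u i * eval xs (pderiv i (pderiv j f)) * u j) →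
      ((∀ u : Fin n → ℝ, (∑ i : Fin n, u i ^ 2 = 1) → (∑ i : Fin n, u i * xs i = 0) →
          lam < ∑ i : Fin n, ∑ j : Fin n, u i * eval xs (pderiv i (pderiv j f)) * u j) ∧
        ∃ ε : ℝ, 0 < ε ∧ ∀ z : Fin n → ℝ, (∑ i : Fin n, z i ^ 2 = 1) →
          (∑ i : Fin n, (z i - xs i) ^ 2 < ε) → eval xs f ≤ eval z f) :=
  stmt19_general n f hno
end
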